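/- Fix k ∈ ℕ and n ≥ 1, and let π be a non-crossing partition of [(k+1)n]. Then Red(π ∪ Kr(π)) is a non-crossing partition of [n] ∪ [n̄] (with the order 1 < 1̄ < 2 < 2̄ < ... < n < n̄) if and only if π satisfies the mod n reduction property, i.e. π ∈ NC^{(k)}(n). -/

import Mathlib

open scoped BigOperators
attribute [local instance] Classical.propDecidable

/-- A (set) partition of a type `X`: nonempty blocks, every point in a unique block. -/
def IsPartition {X : Type*} (P : Finset (Finset X)) : Prop :=
  (∀ B ∈ P, B.Nonempty) ∧ ∀ x : X, ∃! B, B ∈ P ∧ x ∈ B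

/-- Non-crossing collection of blocks in a linear order. -/
def IsNonCrossing {X : Type*} [LinearOrder X] (P : Finset (Finset X)) : Prop :=
  ∀ a b c d : X, a < b → b < c → c < d →
    (∃ B ∈ P, a ∈ B ∧ c ∈ B) → (∃ B ∈ P, b ∈ B ∧ d ∈ B) →
    ∃ B ∈ P, a ∈ B ∧ b ∈ B

/-- The finset `NC(n)` of non-crossing partitions of `[n]` (modelled on `Fin n`). -/
noncomputable def ncFinset (n : ℕ) : Finset (Finset (Finset (Fin n))) :=
  Finset.univ.filter fun P => IsPartition P ∧ IsNonCrossing P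

/-- The subtuple `(a_1,…,a_n)|V` of the entries indexed by `V`, in increasing order. -/
noncomputable def restrictTuple {A : Type*} {n : ℕ} (a : Fin n → A) (V : Finset (Fin n)) :
    Fin V.card → A :=
  fun i => a (V.orderIsoOfFin rfl i).1
/-- The interleaved set `[m] ∪ [m̄]` with order `1 < 1̄ < 2 < 2̄ < ⋯ < m < m̄`
(unbarred = `false`, barred = `true`). -/
abbrev Interl (m : ℕ) := Lex (Fin m × Bool)

/-- The copy of a block of `[m]` inside the unbarred part of `[m] ∪ [m̄]`. -/
def unbar {m : ℕ} (B : Finset (Fin m)) : Finset (Interl m) :=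
  B.image fun i => toLex (i, false)

/-- The copy of a block of `[m]` inside the barred part of `[m] ∪ [m̄]`. -/
def barred {m : ℕ} (B : Finset (Fin m)) : Finset (Interl m) :=
  B.image fun i => toLex (i, true)

/-- The union `p ∪ q` of a partition `p` of `[m]` and a partition `q` of the barred copy
`[m̄]` (blocks of `q` being recorded by their unbarred labels), as a collection of blocks
of the interleaved set `[m] ∪ [m̄]`. -/
noncomputable def unionPart {m : ℕ} (p q : Finset (Finset (Fin m))) :
    Finset (Finset (Interl m)) :=
  p.image unbar ∪ q.image barred

/-- `P` refines `Q` (reverse refinement order: `P ≼ Q`). -/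
def Refines {X : Type*} (P Q : Finset (Finset X)) : Prop :=
  ∀ B ∈ P, ∃ C ∈ Q, B ⊆ C

/-- `q` is the Kreweras complement of `p`: `q` is a partition of `[m̄]` (identified with
a partition of `[m]` by relabeling) such that `p ∪ q` is non-crossing on the interleaved
set, and `q` is the greatest such partition for the reverse refinement order. -/
def IsKr {m : ℕ} (p q : Finset (Finset (Fin m))) : Prop :=
  IsPartition q ∧ IsNonCrossing (unionPart p q) ∧
    ∀ q' : Finset (Finset (Fin m)), IsPartition q' → IsNonCrossing (unionPart p q') →
      Refines q' q

/-- The Kreweras complement `Kr(p)`, as a function (defined via choice: for a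
non-crossing partition `p` the complement exists and is unique). -/
noncomputable def kr {m : ℕ} (p : Finset (Finset (Fin m))) : Finset (Finset (Fin m)) :=
  if h : ∃ q, IsKr p q then h.choose else ∅
/-- The reduction map `Red : [(k+1)n] → [n]`, sending `x` to its residue mod `n`
(with `Fin` modelling, `x ↦ x % n`). -/
def red {k n : ℕ} (x : Fin ((k + 1) * n)) : Fin n :=
  ⟨x.1 % n, Nat.mod_lt _ (Nat.pos_of_ne_zero (by rintro rfl; exact absurd x.2 (by simp)))⟩

/-- The image of a collection of blocks under the reduction map. -/
noncomputable def redPart {k n : ℕ} (P : Finset (Finset (Fin ((k + 1) * n)))) :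
    Finset (Finset (Fin n)) :=
  P.image fun B => B.image red

/-- The reduction map on the interleaved set, preserving bars. -/
def redInterl {k n : ℕ} (x : Interl ((k + 1) * n)) : Interl n :=
  toLex (red (ofLex x).1, (ofLex x).2)

/-- `NC^{(k)}(n)`: the non-crossing partitions of `[(k+1)n]` satisfying the mod `n`
reduction property, i.e. `Red(π)` is a non-crossing partition of `[n]` and
`Red(Kr(π))` is a non-crossing partition of `[n̄]`. -/
def NCk (k n : ℕ) : Set (Finset (Finset (Fin ((k + 1) * n)))) :=
  {π | IsPartition π ∧ IsNonCrossing π ∧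
       IsPartition (redPart π) ∧ IsNonCrossing (redPart π) ∧
       IsPartition (redPart (kr π)) ∧ IsNonCrossing (redPart (kr π))}

/-!
A reduction of a non-crossing partition which is again a partition is automatically
non-crossing. Let `σ` be a non-crossing partition of a finite chain and `f` a map sending `σ` to
a partition which, between any two points, takes one of any two values separating their images
cyclically, as `x ↦ x % M` does. If blocks `B ≠ C` of `f(σ)` crossed, take a block `D` of `σ`
meeting `f⁻¹(B ∪ C)` with smallest convex hull. It maps onto `B`, say, so it contains preimages
of two points of `B` separated by a preimage of a point of `C`; the block of that point lies
strictly inside a gap of `D` and has a smaller hull. Apply this to `σ = π ∪ Kr(π)`: counted by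
position in `[(k+1)n] ∪ [(k+1)n]‾`, `Red` is reduction mod `2n`.
-/

theorem IsPartition.eq_of_mem {X : Type*} {σ : Finset (Finset X)} (hσ : IsPartition σ)
    {B C : Finset X} {x : X} (hB : B ∈ σ) (hC : C ∈ σ) (hxB : x ∈ B) (hxC : x ∈ C) : B = C := by
  obtain ⟨D, -, hD⟩ := hσ.2 x
  rw [hD B ⟨hB, hxB⟩, hD C ⟨hC, hxC⟩]

section NonCrossing

variable {Z : Type*} [LinearOrder Z] {σ : Finset (Finset Z)}

theorem IsNonCrossing.subset_Ioo (hσ : IsPartition σ) (hnc : IsNonCrossing σ)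
    {D E : Finset Z} (hD : D ∈ σ) (hE : E ∈ σ) {u v w : Z} (hu : u ∈ D) (hv : v ∈ D)
    (hwE : w ∈ E) (hwD : w ∉ D) (huw : u < w) (hwv : w < v) :
    (E : Set Z) ⊆ Set.Ioo u v := by
  intro z hzE
  have hzD : z ∉ D := fun hzD => hwD (hσ.eq_of_mem hE hD hzE hzD ▸ hwE)
  refine ⟨lt_of_not_ge fun hzu => ?_, lt_of_not_ge fun hvz => ?_⟩
  · obtain hzu | rfl := hzu.lt_or_eq
    · obtain ⟨B, hB, hzB, huB⟩ := hnc z u w v hzu huw hwv ⟨E, hE, hzE, hwE⟩ ⟨D, hD, hu, hv⟩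
      exact hzD (hσ.eq_of_mem hB hD huB hu ▸ hzB)
    · exact hzD hu
  · obtain hvz | rfl := hvz.lt_or_eq
    · obtain ⟨B, hB, huB, hwB⟩ := hnc u w v z huw hwv hvz ⟨D, hD, hu, hv⟩ ⟨E, hE, hwE, hzE⟩
      exact hwD (hσ.eq_of_mem hB hD huB hu ▸ hwB)
    · exact hzD hv

theorem IsNonCrossing.exists_innermost_block [Fintype Z] (hσ : IsPartition σ)
    (hnc : IsNonCrossing σ) {U : Set Z} (hU : U.Nonempty) :
    ∃ D ∈ σ, (∃ x ∈ D, x ∈ U) ∧ ∀ u ∈ D, ∀ v ∈ D, ∀ w ∈ U, u < w → w < v → w ∈ D := by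
  let hull : Finset Z → Finset Z := fun D =>
    Finset.univ.filter fun z => ∃ x ∈ D, ∃ y ∈ D, x ≤ z ∧ z ≤ y
  obtain ⟨x, hx⟩ := hU
  obtain ⟨B, ⟨hB, hxB⟩, -⟩ := hσ.2 x
  obtain ⟨D, hD, hmin⟩ := (σ.filter fun D => ∃ x ∈ D, x ∈ U).exists_min_image
    (fun D => (hull D).card) ⟨B, Finset.mem_filter.2 ⟨hB, x, hxB, hx⟩⟩
  obtain ⟨hDσ, hDU⟩ := Finset.mem_filter.1 hD
  refine ⟨D, hDσ, hDU, fun u hu v hv w hw huw hwv => by_contra fun hwD => ?_⟩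
  obtain ⟨E, ⟨hE, hwE⟩, -⟩ := hσ.2 w
  have hEuv := hnc.subset_Ioo hσ hDσ hE hu hv hwE hwD huw hwv
  have hlt : (hull E).card < (hull D).card := by
    refine Finset.card_lt_card ⟨fun z hz => ?_, fun hsub => ?_⟩
    · obtain ⟨-, x, hxE, y, hyE, hxz, hzy⟩ := Finset.mem_filter.1 hz
      exact Finset.mem_filter.2 ⟨Finset.mem_univ z, u, hu, v, hv,
        ((hEuv hxE).1.trans_le hxz).le, (hzy.trans_lt (hEuv hyE).2).le⟩
    · obtain ⟨-, x, hxE, -, -, hxu, -⟩ :=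
        Finset.mem_filter.1 (hsub (Finset.mem_filter.2
          ⟨Finset.mem_univ u, u, hu, u, hu, le_rfl, le_rfl⟩))
      exact (hEuv hxE).1.not_ge hxu
  exact hlt.not_ge (hmin E (Finset.mem_filter.2 ⟨hE, w, hwE, hw⟩))

def HasCyclicIntermediateValues {Y : Type*} [LinearOrder Y] (f : Z → Y) : Prop :=
  ∀ u v : Z, ∀ p q : Y, f u < p → p < f v → q < f u ∨ f v < q →
    ∃ w, (u < w ∧ w < v ∨ v < w ∧ w < u) ∧ (f w = p ∨ f w = q)

theorem IsNonCrossing.image [Fintype Z] {Y : Type*} [LinearOrder Y] [DecidableEq Y]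
    {f : Z → Y} (hf : HasCyclicIntermediateValues f) (hσ : IsPartition σ) (hnc : IsNonCrossing σ)
    (himg : IsPartition (σ.image fun V => V.image f)) :
    IsNonCrossing (σ.image fun V => V.image f) := by
  intro a b c d hab hbc hcd ⟨B, hB, haB, hcB⟩ ⟨C, hC, hbC, hdC⟩
  by_cases hBC : B = C
  · exact ⟨B, hB, haB, hBC ▸ hbC⟩
  exfalso
  obtain ⟨D₀, -, rfl⟩ := Finset.mem_image.1 hB
  obtain ⟨x₀, -, hx₀⟩ := Finset.mem_image.1 haB
  obtain ⟨D, hD, ⟨x, hxD, hxU⟩, hinner⟩ := hnc.exists_innermost_block hσ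
    (U := {z | f z ∈ D₀.image f ∪ C}) ⟨x₀, Finset.mem_union_left _ (hx₀ ▸ haB)⟩
  have eq_of_separated : ∀ B' ∈ σ.image (fun V => V.image f), ∀ C' ∈ σ.image (fun V => V.image f),
      C' ⊆ D₀.image f ∪ C → f x ∈ B' → ∀ p₁ ∈ B', ∀ p₂ ∈ B', ∀ p ∈ C', ∀ q ∈ C',
      p₁ < p → p < p₂ → q < p₁ ∨ p₂ < q → B' = C' := by
    intro B' hB' C' hC' hC'U hxB' p₁ hp₁ p₂ hp₂ p hp q hq h₁ h₂ h₃
    have hDB' : D.image f = B' :=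
      himg.eq_of_mem (Finset.mem_image_of_mem _ hD) hB' (Finset.mem_image_of_mem f hxD) hxB'
    obtain ⟨u, hu, rfl⟩ := Finset.mem_image.1 (hDB' ▸ hp₁)
    obtain ⟨v, hv, rfl⟩ := Finset.mem_image.1 (hDB' ▸ hp₂)
    obtain ⟨w, hw, hfw⟩ := hf u v p q h₁ h₂ h₃
    have hwC' : f w ∈ C' := by rcases hfw with h | h <;> rw [h] <;> assumption
    have hwD : w ∈ D := by
      rcases hw with ⟨h, h'⟩ | ⟨h, h'⟩
      · exact hinner u hu v hv w (hC'U hwC') h h'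
      · exact hinner v hv u hu w (hC'U hwC') h h'
    exact himg.eq_of_mem hB' hC' (hDB' ▸ Finset.mem_image_of_mem f hwD) hwC'
  rcases Finset.mem_union.1 (show f x ∈ D₀.image f ∪ C from hxU) with hx | hx
  · exact hBC (eq_of_separated _ hB C hC Finset.subset_union_right hx a haB c hcB b hbC d hdC
      hab hbc (Or.inr hcd))
  · exact hBC (eq_of_separated C hC _ hB Finset.subset_union_left hx b hbC d hdC c hcB a haB
      hbc hcd (Or.inl hab)).symm

end NonCrossing

theorem Nat.exists_between_mod_eq {M u v t : ℕ} (huv : u < v) (ht : t < M)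
    (h : u % M < t ∧ t < v % M ∨ v % M < u % M ∧ (u % M < t ∨ t < v % M)) :
    ∃ w, u < w ∧ w < v ∧ w % M = t := by
  have hu := Nat.div_add_mod u M
  have hv := Nat.div_add_mod v M
  have hum : u % M < M := Nat.mod_lt u (by omega)
  have hdiv : M * (u / M) ≤ M * (v / M) := Nat.mul_le_mul_left M (Nat.div_le_div_right huv.le)
  have hmod (j : ℕ) : (M * j + t) % M = t := by rw [Nat.mul_add_mod, Nat.mod_eq_of_lt ht]
  rcases h with ⟨h₁, h₂⟩ | ⟨hwrap, h⟩
  · exact ⟨M * (u / M) + t, by omega, by omega, hmod _⟩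
  have hdiv' : M * (u / M + 1) ≤ M * (v / M) := by
    refine Nat.mul_le_mul_left M (Nat.lt_of_not_le fun hle => ?_)
    have := Nat.mul_le_mul_left M hle
    omega
  rw [Nat.mul_succ] at hdiv'
  rcases h with h | h
  · exact ⟨M * (u / M) + t, by omega, by omega, hmod _⟩
  · exact ⟨M * (v / M) + t, by omega, by omega, hmod _⟩

/-- The position of `x` in the sequence `1 < 1̄ < 2 < 2̄ < ⋯`, counted from `0`. -/
def interlPos {m : ℕ} (x : Interl m) : ℕ :=
  2 * (ofLex x).1 + (ofLex x).2.toNat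

theorem interlPos_strictMono {m : ℕ} : StrictMono (interlPos (m := m)) := by
  intro x y hxy
  have hx := Bool.toNat_le (ofLex x).2
  have hy := Bool.toNat_le (ofLex y).2
  rcases Prod.Lex.lt_iff.1 hxy with h | ⟨h, h'⟩
  · have : (ofLex x).1.1 < (ofLex y).1.1 := h
    unfold interlPos; omega
  · unfold interlPos
    rw [h]
    have : (ofLex x).2.toNat < (ofLex y).2.toNat := by
      revert h'; cases (ofLex x).2 <;> cases (ofLex y).2 <;> simp
    omega

theorem interlPos_lt {m : ℕ} (x : Interl m) : interlPos x < 2 * m := by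
  have := Bool.toNat_le (ofLex x).2
  have := (ofLex x).1.2
  unfold interlPos; omega

theorem exists_interlPos_eq {m i : ℕ} (hi : i < 2 * m) : ∃ x : Interl m, interlPos x = i :=
  ⟨toLex (⟨i / 2, by omega⟩, i % 2 == 1), by
    unfold interlPos
    rcases Nat.mod_two_eq_zero_or_one i with h | h <;> simp [h] <;> omega⟩

theorem interlPos_redInterl {k n : ℕ} (x : Interl ((k + 1) * n)) :
    interlPos (redInterl x) = interlPos x % (2 * n) := by
  have hb := Bool.toNat_le (ofLex x).2
  have hn : 0 < n := Nat.pos_of_ne_zero (by rintro rfl; exact (ofLex x).1.elim0)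
  have hlt := Nat.mod_lt (ofLex x).1.1 hn
  have hdiv := Nat.div_add_mod (ofLex x).1.1 n
  show 2 * ((ofLex x).1.1 % n) + (ofLex x).2.toNat
    = (2 * (ofLex x).1.1 + (ofLex x).2.toNat) % (2 * n)
  rw [show 2 * (ofLex x).1.1 + (ofLex x).2.toNat
      = 2 * n * ((ofLex x).1.1 / n) + (2 * ((ofLex x).1.1 % n) + (ofLex x).2.toNat) by
    rw [mul_assoc]; omega, Nat.mul_add_mod, Nat.mod_eq_of_lt (by omega : _ < 2 * n)]

theorem hasCyclicIntermediateValues_redInterl {k n : ℕ} :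
    HasCyclicIntermediateValues (redInterl (k := k) (n := n)) := by
  intro u v p q h₁ h₂ h₃
  simp only [← interlPos_strictMono.lt_iff_lt, interlPos_redInterl] at h₁ h₂ h₃
  have hlift {i : ℕ} {x : Interl ((k + 1) * n)} (hi : i < interlPos x) :
      ∃ w, interlPos w = i :=
    exists_interlPos_eq (hi.trans (interlPos_lt x))
  have hred {w : Interl ((k + 1) * n)} {r : Interl n} (h : interlPos w % (2 * n) = interlPos r) :
      redInterl w = r :=
    interlPos_strictMono.injective (by rw [interlPos_redInterl, h])
  have hne : u ≠ v := by rintro rfl; omega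
  rcases hne.lt_or_gt with huv | hvu
  · obtain ⟨i, hui, hiv, hi⟩ := Nat.exists_between_mod_eq (interlPos_strictMono huv)
      (interlPos_lt p) (Or.inl ⟨h₁, h₂⟩)
    obtain ⟨w, rfl⟩ := hlift hiv
    exact ⟨w, Or.inl ⟨interlPos_strictMono.lt_iff_lt.1 hui, interlPos_strictMono.lt_iff_lt.1 hiv⟩,
      Or.inl (hred hi)⟩
  · obtain ⟨i, hvi, hiu, hi⟩ := Nat.exists_between_mod_eq (interlPos_strictMono hvu)
      (interlPos_lt q) (Or.inr ⟨h₁.trans h₂, h₃.symm⟩)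
    obtain ⟨w, rfl⟩ := hlift hiu
    exact ⟨w, Or.inr ⟨interlPos_strictMono.lt_iff_lt.1 hvi, interlPos_strictMono.lt_iff_lt.1 hiu⟩,
      Or.inr (hred hi)⟩

section UnionPart

variable {m : ℕ} {p q : Finset (Finset (Fin m))}

@[simp]
theorem toLex_mem_unbar {B : Finset (Fin m)} {i : Fin m} {b : Bool} :
    toLex (i, b) ∈ unbar B ↔ b = false ∧ i ∈ B := by
  simp [unbar, and_comm]

@[simp]
theorem toLex_mem_barred {B : Finset (Fin m)} {i : Fin m} {b : Bool} :
    toLex (i, b) ∈ barred B ↔ b = true ∧ i ∈ B := by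
  simp [barred, and_comm]

theorem unbar_injective : Function.Injective (unbar (m := m)) :=
  fun B C h => Finset.ext fun i => by simpa using congrArg (toLex (i, false) ∈ ·) h

theorem barred_injective : Function.Injective (barred (m := m)) :=
  fun B C h => Finset.ext fun i => by simpa using congrArg (toLex (i, true) ∈ ·) h

theorem mem_unionPart {D : Finset (Interl m)} :
    D ∈ unionPart p q ↔ (∃ B ∈ p, unbar B = D) ∨ ∃ B ∈ q, barred B = D := by
  simp [unionPart]

theorem unbar_mem_unionPart {B : Finset (Fin m)} (hB : B ∈ p) : unbar B ∈ unionPart p q :=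
  mem_unionPart.2 (Or.inl ⟨B, hB, rfl⟩)

theorem barred_mem_unionPart {B : Finset (Fin m)} (hB : B ∈ q) : barred B ∈ unionPart p q :=
  mem_unionPart.2 (Or.inr ⟨B, hB, rfl⟩)

theorem isPartition_unionPart_iff :
    IsPartition (unionPart p q) ↔ IsPartition p ∧ IsPartition q := by
  refine ⟨fun h => ⟨⟨fun B hB => ?_, fun i => ?_⟩, ⟨fun B hB => ?_, fun i => ?_⟩⟩,
    fun ⟨hp, hq⟩ => ⟨fun D hD => ?_, fun x => ?_⟩⟩
  · exact Finset.image_nonempty.1 (h.1 _ (unbar_mem_unionPart hB))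
  · obtain ⟨D, ⟨hD, hiD⟩, huniq⟩ := h.2 (toLex (i, false))
    rcases mem_unionPart.1 hD with ⟨B, hB, rfl⟩ | ⟨B, -, rfl⟩
    · exact ⟨B, ⟨hB, by simpa using hiD⟩, fun C ⟨hC, hiC⟩ =>
        unbar_injective (huniq _ ⟨unbar_mem_unionPart hC, by simpa using hiC⟩)⟩
    · simp at hiD
  · exact Finset.image_nonempty.1 (h.1 _ (barred_mem_unionPart hB))
  · obtain ⟨D, ⟨hD, hiD⟩, huniq⟩ := h.2 (toLex (i, true))
    rcases mem_unionPart.1 hD with ⟨B, -, rfl⟩ | ⟨B, hB, rfl⟩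
    · simp at hiD
    · exact ⟨B, ⟨hB, by simpa using hiD⟩, fun C ⟨hC, hiC⟩ =>
        barred_injective (huniq _ ⟨barred_mem_unionPart hC, by simpa using hiC⟩)⟩
  · rcases mem_unionPart.1 hD with ⟨B, hB, rfl⟩ | ⟨B, hB, rfl⟩
    · exact (hp.1 B hB).image _
    · exact (hq.1 B hB).image _
  · obtain ⟨⟨i, _ | _⟩, rfl⟩ := toLex.surjective x
    · obtain ⟨B, ⟨hB, hiB⟩, huniq⟩ := hp.2 i
      refine ⟨unbar B, ⟨unbar_mem_unionPart hB, by simpa using hiB⟩, fun D ⟨hD, hxD⟩ => ?_⟩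
      rcases mem_unionPart.1 hD with ⟨C, hC, rfl⟩ | ⟨C, -, rfl⟩
      · rw [huniq C ⟨hC, by simpa using hxD⟩]
      · simp at hxD
    · obtain ⟨B, ⟨hB, hiB⟩, huniq⟩ := hq.2 i
      refine ⟨barred B, ⟨barred_mem_unionPart hB, by simpa using hiB⟩, fun D ⟨hD, hxD⟩ => ?_⟩
      rcases mem_unionPart.1 hD with ⟨C, -, rfl⟩ | ⟨C, hC, rfl⟩
      · simp at hxD
      · rw [huniq C ⟨hC, by simpa using hxD⟩]

end UnionPart

theorem IsNonCrossing.of_unionPart_left {m : ℕ} {p q : Finset (Finset (Fin m))}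
    (h : IsNonCrossing (unionPart p q)) : IsNonCrossing p := by
  intro a b c d hab hbc hcd ⟨B, hB, haB, hcB⟩ ⟨C, hC, hbC, hdC⟩
  obtain ⟨D, hD, haD, hbD⟩ := h (toLex (a, false)) (toLex (b, false)) (toLex (c, false))
    (toLex (d, false)) (by simpa [Prod.Lex.lt_iff]) (by simpa [Prod.Lex.lt_iff])
    (by simpa [Prod.Lex.lt_iff]) ⟨unbar B, unbar_mem_unionPart hB, by simp [haB, hcB]⟩
    ⟨unbar C, unbar_mem_unionPart hC, by simp [hbC, hdC]⟩
  rcases mem_unionPart.1 hD with ⟨W, hW, rfl⟩ | ⟨W, -, rfl⟩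
  · exact ⟨W, hW, by simpa using haD, by simpa using hbD⟩
  · simp at haD

theorem IsNonCrossing.of_unionPart_right {m : ℕ} {p q : Finset (Finset (Fin m))}
    (h : IsNonCrossing (unionPart p q)) : IsNonCrossing q := by
  intro a b c d hab hbc hcd ⟨B, hB, haB, hcB⟩ ⟨C, hC, hbC, hdC⟩
  obtain ⟨D, hD, haD, hbD⟩ := h (toLex (a, true)) (toLex (b, true)) (toLex (c, true))
    (toLex (d, true)) (by simpa [Prod.Lex.lt_iff]) (by simpa [Prod.Lex.lt_iff])
    (by simpa [Prod.Lex.lt_iff]) ⟨barred B, barred_mem_unionPart hB, by simp [haB, hcB]⟩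
    ⟨barred C, barred_mem_unionPart hC, by simp [hbC, hdC]⟩
  rcases mem_unionPart.1 hD with ⟨W, -, rfl⟩ | ⟨W, hW, rfl⟩
  · simp at haD
  · exact ⟨W, hW, by simpa using haD, by simpa using hbD⟩

theorem image_unionPart_redInterl {k n : ℕ} (p q : Finset (Finset (Fin ((k + 1) * n)))) :
    (unionPart p q).image (fun V => V.image redInterl) = unionPart (redPart p) (redPart q) := by
  simp [unionPart, redPart, Finset.image_union, Finset.image_image, unbar, barred,
    Function.comp_def, redInterl]

theorem isKr_kr_of_nonempty {m : ℕ} {p : Finset (Finset (Fin m))} (h : (kr p).Nonempty) :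
    IsKr p (kr p) := by
  unfold kr at h ⊢
  split_ifs at h ⊢ with hex
  · exact hex.choose_spec
  · simp at h

theorem stmt8_general (k n : ℕ)
    (π : Finset (Finset (Fin ((k + 1) * n))))
    (hpart : IsPartition π) (hnc : IsNonCrossing π) :
    (IsPartition ((unionPart π (kr π)).image fun V => V.image redInterl) ∧
      IsNonCrossing ((unionPart π (kr π)).image fun V => V.image redInterl))
    ↔ π ∈ NCk k n := by
  rw [image_unionPart_redInterl, isPartition_unionPart_iff]
  constructor
  · rintro ⟨⟨hPπ, hPkr⟩, hNC⟩
    exact ⟨hpart, hnc, hPπ, hNC.of_unionPart_left, hPkr, hNC.of_unionPart_right⟩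
  rintro ⟨-, -, hPπ, -, hPkr, -⟩
  refine ⟨⟨hPπ, hPkr⟩, ?_⟩
  rcases isEmpty_or_nonempty (Fin n) with hn | ⟨⟨i⟩⟩
  · exact fun a => isEmptyElim (ofLex a).1
  -- `kr π` falls back to `∅` when no complement exists; `Red (kr π)` covering `[n]` excludes this.
  obtain ⟨B, ⟨hB, -⟩, -⟩ := hPkr.2 i
  have hkr : IsKr π (kr π) := isKr_kr_of_nonempty (Finset.image_nonempty.1 ⟨B, hB⟩)
  have hred := isPartition_unionPart_iff.2 ⟨hPπ, hPkr⟩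
  rw [← image_unionPart_redInterl] at hred ⊢
  exact hkr.2.1.image hasCyclicIntermediateValues_redInterl
    (isPartition_unionPart_iff.2 ⟨hpart, hkr.1⟩) hred

/-- **Statement 8.** For a non-crossing partition `π` of `[(k+1)n]`, the reduction
`Red(π ∪ Kr(π))` is a non-crossing partition of `[n] ∪ [n̄]` (with the interleaved
order) if and only if `π` satisfies the mod `n` reduction property, i.e. `π ∈ NC^{(k)}(n)`. -/
theorem stmt8 (k n : ℕ) (hn : 1 ≤ n)
    (π : Finset (Finset (Fin ((k + 1) * n))))
    (hpart : IsPartition π) (hnc : IsNonCrossing π) :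
    (IsPartition ((unionPart π (kr π)).image fun V => V.image redInterl) ∧
      IsNonCrossing ((unionPart π (kr π)).image fun V => V.image redInterl))
    ↔ π ∈ NCk k n :=
  stmt8_general k n π hpart hnc
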